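/- Let k ≥ 2 be an integer, β = √(k/(k−1)) − 1, and α = 2k + 2√(k(k−1)) − 1. Let μ be a probability distribution over subsets of a finite set M with P_μ[j ∈ T] ≤ β/(1+β) for all j. Then for every MPH-k function v and every S ⊆ M, β·∑_T μ(T)·v(S \ T) ≥ (1/α)·v(S). -/

import Mathlib

open Finset

/-- `v` is an MPH-`k` function: the pointwise maximum of finitely many PH-`k`
functions, i.e. functions of the form `S ↦ ∑ X ⊆ S, w X` with `w ≥ 0`
supported on sets of cardinality at most `k`. -/
def IsMPH {ι : Type*} [DecidableEq ι] (k : ℕ) (v : Finset ι → ℝ) : Prop :=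
  ∃ t : ℕ, 0 < t ∧ ∃ w : Fin t → Finset ι → ℝ,
    (∀ ℓ X, 0 ≤ w ℓ X) ∧
    (∀ (ℓ : Fin t) (X : Finset ι), k < X.card → w ℓ X = 0) ∧
    (∀ S : Finset ι, ∃ ℓ : Fin t, v S = ∑ X ∈ S.powerset, w ℓ X) ∧
    (∀ (S : Finset ι) (ℓ : Fin t), (∑ X ∈ S.powerset, w ℓ X) ≤ v S)

/-! Fix a PH function `S ↦ ∑ X ⊆ S, w X` attaining `v S`. Every `X ⊆ S` that misses `T` still
counts in `v (S \ T)`, and by the union bound a set `X` with `|X| ≤ k` misses the random set `T`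
with probability at least `1 - k p`, where `p = β / (1 + β)`. Hence `𝔼 v (S \ T) ≥ (1 - k p) v S`,
and with `r = √(k / (k - 1))` the constants satisfy `β (1 - k p) = 1 / α`. -/

section Constants

variable {K : ℝ}

lemma sqrt_ratio_sub_one_nonneg (hK : 1 < K) : 0 ≤ √(K / (K - 1)) - 1 := by
  have : 1 ≤ K / (K - 1) := by rw [le_div_iff₀ (by linarith)]; linarith
  linarith [Real.one_le_sqrt.mpr this]

lemma sqrt_mul_sub_one_eq (hK : 1 < K) : √(K * (K - 1)) = (K - 1) * √(K / (K - 1)) := by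
  have hK1 : 0 < K - 1 := by linarith
  rw [show K * (K - 1) = (K - 1) ^ 2 * (K / (K - 1)) by field_simp, Real.sqrt_mul (by positivity),
    Real.sqrt_sq hK1.le]

lemma sqrt_ratio_sub_one_mul_one_sub_mul_div_eq (hK : 1 < K) :
    (√(K / (K - 1)) - 1) * (1 - K * ((√(K / (K - 1)) - 1) / (1 + (√(K / (K - 1)) - 1)))) =
      1 / (2 * K + 2 * √(K * (K - 1)) - 1) := by
  have hK1 : 0 < K - 1 := by linarith
  set r := √(K / (K - 1))
  have hr : 0 < r := Real.sqrt_pos.mpr (by positivity)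
  have hr2 : (K - 1) * r ^ 2 = K := by
    rw [Real.sq_sqrt (by positivity)]; field_simp
  rw [sqrt_mul_sub_one_eq hK, add_sub_cancel]
  have hα : 0 < 2 * K + 2 * ((K - 1) * r) - 1 := by nlinarith
  rw [eq_div_iff hα.ne']
  field_simp
  -- `(K - (K-1) r) (2K - 1 + 2(K-1) r) = K + (K-1) r` and `(r - 1) (K + (K-1) r) = r`, modulo `hr2`
  linear_combination (2 * K - 1 - 2 * (K - 1) * r) * hr2

end Constants

section UnionBound

variable {ι : Type*} [Fintype ι] [DecidableEq ι] {μ : Finset ι → ℝ}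

lemma sum_not_disjoint_le_sum_sum_mem (hμ0 : ∀ T, 0 ≤ μ T) (X : Finset ι) :
    (∑ T, if ¬Disjoint X T then μ T else 0) ≤ ∑ j ∈ X, ∑ T, if j ∈ T then μ T else 0 := by
  rw [Finset.sum_comm]
  refine Finset.sum_le_sum fun T _ => ?_
  by_cases hXT : Disjoint X T
  · rw [if_neg (not_not.mpr hXT)]
    exact Finset.sum_nonneg fun j _ => ite_nonneg (hμ0 T) le_rfl
  · obtain ⟨j, hjX, hjT⟩ := Finset.not_disjoint_iff.mp hXT
    calc (if ¬Disjoint X T then μ T else 0) = if j ∈ T then μ T else 0 := by simp [hXT, hjT]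
      _ ≤ _ := Finset.single_le_sum (fun i _ => ite_nonneg (hμ0 T) le_rfl) hjX

lemma one_sub_card_mul_le_sum_disjoint (hμ0 : ∀ T, 0 ≤ μ T) (hμ1 : ∑ T, μ T = 1) {p : ℝ}
    (hmarg : ∀ j, (∑ T, if j ∈ T then μ T else 0) ≤ p) (X : Finset ι) :
    1 - X.card * p ≤ ∑ T, if Disjoint X T then μ T else 0 := by
  have hsplit : (∑ T, if Disjoint X T then μ T else 0) +
      (∑ T, if ¬Disjoint X T then μ T else 0) = 1 := by
    rw [← Finset.sum_add_distrib, ← hμ1]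
    exact Finset.sum_congr rfl fun T _ => by split_ifs <;> simp_all
  have hmarg_sum : ∑ j ∈ X, (∑ T, if j ∈ T then μ T else 0) ≤ X.card * p := by
    simpa using Finset.sum_le_card_nsmul X _ p fun j _ => hmarg j
  linarith [sum_not_disjoint_le_sum_sum_mem hμ0 X]

end UnionBound

section Expectation

variable {ι : Type*} [Fintype ι] [DecidableEq ι] {μ : Finset ι → ℝ}

lemma sum_mul_sum_powerset_sdiff (w : Finset ι → ℝ) (S : Finset ι) :
    ∑ T, μ T * ∑ X ∈ (S \ T).powerset, w X =
      ∑ X ∈ S.powerset, w X * ∑ T, if Disjoint X T then μ T else 0 := by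
  have hfilter (T : Finset ι) : (S \ T).powerset = S.powerset.filter (Disjoint · T) := by
    ext X; simp [Finset.subset_sdiff]
  simp_rw [hfilter, Finset.sum_filter, Finset.mul_sum]
  rw [Finset.sum_comm]
  exact Finset.sum_congr rfl fun X _ => Finset.sum_congr rfl fun T _ => by split_ifs <;> ring

lemma one_sub_mul_sum_powerset_le (hμ0 : ∀ T, 0 ≤ μ T) (hμ1 : ∑ T, μ T = 1) {p : ℝ}
    (hmarg : ∀ j, (∑ T, if j ∈ T then μ T else 0) ≤ p) (hp : 0 ≤ p) {k : ℕ}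
    {w : Finset ι → ℝ} (hw0 : ∀ X, 0 ≤ w X) (hwk : ∀ X, k < X.card → w X = 0) (S : Finset ι) :
    (1 - k * p) * ∑ X ∈ S.powerset, w X ≤ ∑ T, μ T * ∑ X ∈ (S \ T).powerset, w X := by
  rw [sum_mul_sum_powerset_sdiff, Finset.mul_sum]
  refine Finset.sum_le_sum fun X _ => ?_
  rcases le_or_gt X.card k with hX | hX
  · rw [mul_comm]
    refine mul_le_mul_of_nonneg_left ?_ (hw0 X)
    have : (X.card : ℝ) * p ≤ k * p := by gcongr
    linarith [one_sub_card_mul_le_sum_disjoint hμ0 hμ1 hmarg X]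
  · simp [hwk X hX]

lemma IsMPH.one_sub_mul_le_sum (hμ0 : ∀ T, 0 ≤ μ T) (hμ1 : ∑ T, μ T = 1) {p : ℝ}
    (hmarg : ∀ j, (∑ T, if j ∈ T then μ T else 0) ≤ p) (hp : 0 ≤ p) {k : ℕ}
    {v : Finset ι → ℝ} (hv : IsMPH k v) (S : Finset ι) :
    (1 - k * p) * v S ≤ ∑ T, μ T * v (S \ T) := by
  obtain ⟨t, -, w, hw0, hwk, hv_eq, hv_le⟩ := hv
  obtain ⟨ℓ, hℓ⟩ := hv_eq S
  rw [hℓ]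
  exact (one_sub_mul_sum_powerset_le hμ0 hμ1 hmarg hp (hw0 ℓ) (hwk ℓ) S).trans
    (Finset.sum_le_sum fun T _ => mul_le_mul_of_nonneg_left (hv_le _ ℓ) (hμ0 T))

end Expectation

theorem stmt_15 {ι : Type*} [Fintype ι] [DecidableEq ι]
    (μ : Finset ι → ℝ) (hμ0 : ∀ T, 0 ≤ μ T) (hμ1 : ∑ T : Finset ι, μ T = 1)
    (k : ℕ) (hk : 2 ≤ k)
    (β : ℝ) (hβ : β = Real.sqrt ((k : ℝ) / ((k : ℝ) - 1)) - 1)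
    (α : ℝ) (hα : α = 2 * k + 2 * Real.sqrt ((k : ℝ) * ((k : ℝ) - 1)) - 1)
    (h : ∀ j : ι, (∑ T : Finset ι, if j ∈ T then μ T else 0) ≤ β / (1 + β))
    (v : Finset ι → ℝ) (hv : IsMPH k v) (S : Finset ι) :
    β * (∑ T : Finset ι, μ T * v (S \ T)) ≥ (1 / α) * v S := by
  have hk1 : (1 : ℝ) < k := by exact_mod_cast hk
  have hβ0 : 0 ≤ β := hβ ▸ sqrt_ratio_sub_one_nonneg hk1
  have hβα : β * (1 - k * (β / (1 + β))) = 1 / α := by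
    rw [hβ, hα]; exact sqrt_ratio_sub_one_mul_one_sub_mul_div_eq hk1
  calc (1 / α) * v S = β * ((1 - k * (β / (1 + β))) * v S) := by rw [← mul_assoc, hβα]
    _ ≤ β * ∑ T, μ T * v (S \ T) :=
      mul_le_mul_of_nonneg_left (hv.one_sub_mul_le_sum hμ0 hμ1 h (by positivity) S) hβ0
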